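/- For all integers m ≥ j ≥ 0, ∑_{k=0}^{j} h_k(α_1, α_2, …, α_{m−k+1}) · e_{j−k}(−α_1, −α_2, …, −α_{m−k}) equals 1 if j = 0 and equals 0 if j > 0. -/

import Mathlib

/-!
Write `S(m)` for the sum. Splitting off the last variable,
`h_k(α_1,…,α_{m-k+1}) = h_k(α_1,…,α_{m-k}) + α_{m-k+1} h_{k-1}(α_1,…,α_{m-k+1})` and
`e_{j-k}(-α_1,…,-α_{m-k}) = e_{j-k}(-α_1,…,-α_{m-k-1}) - α_{m-k} e_{j-k-1}(-α_1,…,-α_{m-k-1})`.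
Substituting, the `k`-th summand of `S(m)` is that of `S(m-1)` plus `T(k-1) - T(k)`, where
`T(k) = α_{m-k} h_k(α_1,…,α_{m-k}) e_{j-k-1}(-α_1,…,-α_{m-k-1})`; since `T(-1) = T(j) = 0` the
sum telescopes and `S(m) = S(m-1)`. Descending to `m = j - 1`, every `e`-factor with `k < j` has
more parts than variables, and the remaining term is `h_j` of the empty list, i.e. `δ_{j0}`.
-/

variable {R : Type*} [CommRing R]

/-- Elementary symmetric polynomial `e_m` of the entries of a list (zero for `m < 0`). -/
def esymL (l : List R) (m : ℤ) : R :=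
  if 0 ≤ m then
    ∑ s ∈ Finset.powersetCard m.toNat (Finset.univ : Finset (Fin l.length)), ∏ i ∈ s, l.get i
  else 0

/-- Complete homogeneous symmetric polynomial `h_m` of the entries of a list (zero for `m < 0`). -/
def hsymL (l : List R) (m : ℤ) : R :=
  if 0 ≤ m then
    ∑ s ∈ (Finset.univ : Finset (Fin l.length)).sym m.toNat, ((s.1).map l.get).prod
  else 0

/-- The list `f a, f (a+1), …, f b` (empty if `b < a`). -/
def intList (f : ℤ → R) (a b : ℤ) : List R :=
  (List.range (b + 1 - a).toNat).map (fun p => f (a + (p : ℤ)))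

/-- `e_m(f a, …, f b)`. -/
def eI (f : ℤ → R) (a b m : ℤ) : R := esymL (intList f a b) m

/-- `h_m(f a, …, f b)`. -/
def hI (f : ℤ → R) (a b m : ℤ) : R := hsymL (intList f a b) m

open Finset

theorem Multiset.esymm_cons_succ {S : Type*} [CommSemiring S] (x : S) (s : Multiset S) (n : ℕ) :
    (x ::ₘ s).esymm (n + 1) = s.esymm (n + 1) + x * s.esymm n := by
  simp only [Multiset.esymm, Multiset.powersetCard_cons, Multiset.map_add, Multiset.sum_add,
    Multiset.map_map, Function.comp_def, Multiset.prod_cons, Multiset.sum_map_mul_left]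

lemma esymL_of_neg (l : List R) {n : ℤ} (hn : n < 0) : esymL l n = 0 := if_neg hn.not_ge

lemma hsymL_of_neg (l : List R) {n : ℤ} (hn : n < 0) : hsymL l n = 0 := if_neg hn.not_ge

@[simp] lemma esymL_zero (l : List R) : esymL l 0 = 1 := by simp [esymL]

@[simp] lemma hsymL_zero (l : List R) : hsymL l 0 = 1 := by
  simp only [hsymL, le_refl, if_true, Int.toNat_zero, sym_zero, sum_singleton]
  rfl

lemma hsymL_nil (n : ℤ) : hsymL ([] : List R) n = if n = 0 then 1 else 0 := by
  rcases lt_trichotomy n 0 with hn | rfl | hn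
  · rw [hsymL_of_neg _ hn, if_neg hn.ne]
  · simp
  · obtain ⟨k, hk⟩ : ∃ k : ℕ, n.toNat = k + 1 := ⟨n.toNat - 1, by omega⟩
    rw [hsymL, if_pos hn.le, if_neg hn.ne', hk]
    simp

lemma esymL_eq_zero_of_length_lt (l : List R) {n : ℤ} (h : l.length < n) : esymL l n = 0 := by
  rw [esymL, if_pos (by omega), powersetCard_eq_empty.2 (by rw [card_univ, Fintype.card_fin]; omega), sum_empty]

lemma esymL_natCast (l : List R) (n : ℕ) : esymL l n = Multiset.esymm (l : Multiset R) n := by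
  rw [esymL, if_pos n.cast_nonneg, Int.toNat_natCast, ← esymm_map_val l.get univ n]
  simp [Fin.univ_val_map]

lemma esymL_concat (l : List R) (x : R) (n : ℤ) :
    esymL (l ++ [x]) n = esymL l n + x * esymL l (n - 1) := by
  rcases lt_trichotomy n 0 with hn | rfl | hn
  · simp [esymL_of_neg _ hn, esymL_of_neg _ (show n - 1 < 0 by omega)]
  · simp [esymL_of_neg _ (show (-1 : ℤ) < 0 by omega)]
  · obtain ⟨k, rfl⟩ : ∃ k : ℕ, n = k + 1 := ⟨(n - 1).toNat, by omega⟩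
    have hperm : ((l ++ [x] : List R) : Multiset R) = x ::ₘ l :=
      Multiset.coe_eq_coe.2 (List.perm_append_singleton x l)
    rw [add_sub_cancel_right, ← Nat.cast_succ, esymL_natCast, esymL_natCast,
      esymL_natCast, hperm, Multiset.esymm_cons_succ]

section SymProdSum

variable {S ι κ : Type*} [CommSemiring S] [Fintype ι] [DecidableEq ι] [Fintype κ] [DecidableEq κ]

def symProdSum (f : ι → S) (n : ℕ) : S :=
  ∑ s : Sym ι n, (s.1.map f).prod

lemma symProdSum_comp_equiv (e : ι ≃ κ) (f : κ → S) (n : ℕ) :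
    symProdSum (f ∘ e) n = symProdSum f n :=
  Fintype.sum_equiv (Sym.equivCongr e) _ _ fun s => by
    simp [Sym.equivCongr, Multiset.map_map]

lemma symProdSum_option_succ (f : Option ι → S) (n : ℕ) :
    symProdSum f (n + 1) = f none * symProdSum f n + symProdSum (f ∘ some) (n + 1) := by
  rw [symProdSum, ← symOptionSuccEquiv.symm.sum_comp, Fintype.sum_sum_type, symProdSum,
    symProdSum, mul_sum]
  congr 1 <;> refine sum_congr rfl fun s _ => ?_
  · simp [symOptionSuccEquiv, Sym.cons]
  · simp [symOptionSuccEquiv, Multiset.map_map]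

end SymProdSum

lemma hsymL_natCast (l : List R) (n : ℕ) : hsymL l n = symProdSum l.get n := by
  rw [hsymL, if_pos n.cast_nonneg, Int.toNat_natCast, sym_univ, symProdSum]

lemma hsymL_concat (l : List R) (x : R) (n : ℤ) :
    hsymL (l ++ [x]) n = hsymL l n + x * hsymL (l ++ [x]) (n - 1) := by
  rcases lt_trichotomy n 0 with hn | rfl | hn
  · simp [hsymL_of_neg _ hn, hsymL_of_neg _ (show n - 1 < 0 by omega)]
  · simp [hsymL_of_neg _ (show (-1 : ℤ) < 0 by omega)]
  · obtain ⟨k, rfl⟩ : ∃ k : ℕ, n = k + 1 := ⟨(n - 1).toNat, by omega⟩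
    let e : Option (Fin l.length) ≃ Fin (l ++ [x]).length :=
      finSuccEquivLast.symm.trans (finCongr (by simp))
    have hget : (l ++ [x]).get ∘ e = fun o => o.elim x l.get := by
      funext o
      cases o <;> simp [e, List.getElem_append_left]
    rw [add_sub_cancel_right, ← Nat.cast_succ, hsymL_natCast, hsymL_natCast,
      hsymL_natCast, ← symProdSum_comp_equiv e, ← symProdSum_comp_equiv e, hget,
      symProdSum_option_succ, add_comm]
    rfl

section IntervalLists

variable {M : Type*}

lemma length_intList (f : ℤ → M) (a b : ℤ) : (intList f a b).length = (b + 1 - a).toNat := by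
  simp [intList]

lemma intList_of_lt (f : ℤ → M) {a b : ℤ} (h : b < a) : intList f a b = [] := by
  simp [intList, Int.toNat_of_nonpos (show b + 1 - a ≤ 0 by omega)]

lemma intList_eq_concat (f : ℤ → M) {a b : ℤ} (h : a ≤ b) :
    intList f a b = intList f a (b - 1) ++ [f b] := by
  have h1 : (b + 1 - a).toNat = (b - a).toNat + 1 := by omega
  simp [intList, h1, List.range_succ, max_eq_left (sub_nonneg.2 h)]

end IntervalLists

section IntervalSymmetricFunctions

variable (f : ℤ → R) {a b n : ℤ}

@[simp] lemma eI_zero (a b : ℤ) : eI f a b 0 = 1 := esymL_zero _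

lemma eI_of_neg (a b : ℤ) (hn : n < 0) : eI f a b n = 0 := esymL_of_neg _ hn

lemma hI_of_neg (a b : ℤ) (hn : n < 0) : hI f a b n = 0 := hsymL_of_neg _ hn

lemma eI_eq_zero_of_lt (hn : 0 < n) (h : b + 1 - a < n) : eI f a b n = 0 :=
  esymL_eq_zero_of_length_lt _ (by rw [length_intList]; omega)

lemma hI_of_lt (n : ℤ) (h : b < a) : hI f a b n = if n = 0 then 1 else 0 := by
  rw [hI, intList_of_lt f h, hsymL_nil]

lemma eI_eq_add_mul (n : ℤ) (h : a ≤ b) :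
    eI f a b n = eI f a (b - 1) n + f b * eI f a (b - 1) (n - 1) := by
  rw [eI, eI, eI, intList_eq_concat f h, esymL_concat]

lemma hI_eq_add_mul (n : ℤ) (h : a ≤ b) :
    hI f a b n = hI f a (b - 1) n + f b * hI f a b (n - 1) := by
  rw [hI, hI, hI, intList_eq_concat f h, hsymL_concat]

end IntervalSymmetricFunctions

theorem Int.sum_Icc_sub_one_sub {M : Type*} [AddCommGroup M] (f : ℤ → M) {a b : ℤ}
    (h : a - 1 ≤ b) : ∑ k ∈ Icc a b, (f (k - 1) - f k) = f (a - 1) - f b := by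
  induction b, h using Int.leInduction with
  | base => simp
  | succ n hn ih =>
    rw [← insert_Icc_right_eq_Icc_add_one (by omega), sum_insert (by simp), ih,
      add_sub_cancel_right]
    abel

noncomputable def heConvolution (α : ℤ → R) (a m j : ℤ) : R :=
  ∑ k ∈ Icc 0 j, hI α a (m - k + 1) k * eI (fun t => -α t) a (m - k) (j - k)

section Convolution

variable (α : ℤ → R) {a m j : ℤ}

lemma heConvolution_sub_one (hj : 0 ≤ j) (hm : a + j - 1 ≤ m) :
    heConvolution α a m j = heConvolution α a (m - 1) j := by
  set β : ℤ → R := fun t => -α t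
  set T : ℤ → R := fun k => α (m - k) * hI α a (m - k) k * eI β a (m - k - 1) (j - k - 1)
  have hterm : ∀ k ∈ Icc 0 j, hI α a (m - k + 1) k * eI β a (m - k) (j - k)
      = hI α a (m - 1 - k + 1) k * eI β a (m - 1 - k) (j - k) + (T (k - 1) - T k) := by
    intro k hk
    rw [mem_Icc] at hk
    have hH := hI_eq_add_mul α k (show a ≤ m - k + 1 by omega)
    have hE : eI β a (m - k) (j - k)
        = eI β a (m - k - 1) (j - k) - α (m - k) * eI β a (m - k - 1) (j - k - 1) := by
      rcases hk.2.eq_or_lt with rfl | hlt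
      · simp [eI_of_neg]
      · exact (eI_eq_add_mul β _ (by omega)).trans (by simp only [β, neg_mul, sub_eq_add_neg])
    have e1 : m - (k - 1) = m - k + 1 := by ring
    have e2 : j - (k - 1) - 1 = j - k := by ring
    rw [add_sub_cancel_right] at hH
    rw [show m - 1 - k + 1 = m - k by ring, show m - 1 - k = m - k - 1 by ring]
    simp only [T, e1, e2, add_sub_cancel_right]
    linear_combination eI β a (m - k) (j - k) * hH + hI α a (m - k) k * hE
  have hT₀ : T (0 - 1) = 0 := by simp [T, hI_of_neg]
  have hTj : T j = 0 := by simp [T, eI_of_neg]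
  rw [heConvolution, sum_congr rfl hterm, sum_add_distrib,
    Int.sum_Icc_sub_one_sub T (by omega), hT₀, hTj, sub_zero, add_zero, heConvolution]

lemma heConvolution_base (hj : 0 ≤ j) :
    heConvolution α a (a + j - 2) j = if j = 0 then 1 else 0 := by
  rw [heConvolution, sum_eq_single_of_mem j (by simp [hj])]
  · rw [hI_of_lt _ _ (by omega), sub_self, eI_zero, mul_one]
  · intro k hk hkj
    rw [mem_Icc] at hk
    rw [eI_eq_zero_of_lt _ (by omega) (by omega), mul_zero]

theorem heConvolution_eq (hj : 0 ≤ j) (hm : a + j - 2 ≤ m) :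
    heConvolution α a m j = if j = 0 then 1 else 0 := by
  induction m, hm using Int.leInduction with
  | base => exact heConvolution_base α hj
  | succ n hn ih => rw [heConvolution_sub_one α hj (by omega), add_sub_cancel_right, ih]

end Convolution

/-- Corollary 2.7, first identity: for m ≥ j ≥ 0,
∑_{k=0}^{j} h_k(α_1,…,α_{m−k+1}) e_{j−k}(−α_1,…,−α_{m−k}) = δ_{j0}. -/
theorem product_cob_identity_first (α : ℤ → R) (m j : ℤ) (hj : 0 ≤ j) (hm : j ≤ m) :
    (∑ k ∈ Finset.Icc 0 j,
      hI α 1 (m - k + 1) k * eI (fun t => -α t) 1 (m - k) (j - k))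
      = if j = 0 then 1 else 0 :=
  heConvolution_eq α hj (by omega)
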